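/- arXiv:1609.09043 — 3 statements merged into one kernel-verified Lean document; each statement's English description precedes it below -/
import Mathlib

section
/- Let A(1), A(2) ∈ ℝ^{n×n} have disjoint spectra (no common eigenvalues over ℂ), and let c_1, c_2 ∈ ℝ^{1×n}. If vectors x_1, x_2 ∈ ℝ^n satisfy c_1 A(1)^k x_1 = c_2 A(2)^k x_2 for all k = 0, 1, …, 2n−1, then c_1 A(1)^k x_1 = 0 for all 0 ≤ k ≤ 2n−1. -/
open Matrix Polynomial

/-!
Both output sequences come from linear functionals on polynomials, `Lᵢ f = cᵢ ⬝ᵥ f(Aᵢ) xᵢ`,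
and by Cayley–Hamilton `Lᵢ` vanishes on multiples of `pᵢ = charpoly Aᵢ`. The difference
`L₁ - L₂` then vanishes on multiples of the monic `p₁ p₂` of degree `2n`, and by hypothesis on
all polynomials of degree `< 2n`; division with remainder by `p₁ p₂` makes it vanish everywhere.
Disjoint spectra make `p₁, p₂` coprime, say `u p₁ + v p₂ = 1`, and then
`L₁ f = L₁ (f v p₂) = L₂ (f v p₂) = 0`.
-/

section OutputFunctional

variable {R : Type*} [CommRing R] {ι : Type*} [Fintype ι] [DecidableEq ι]

noncomputable def Matrix.outputFunctional (A : Matrix ι ι R) (c x : ι → R) : R[X] →ₗ[R] R where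
  toFun f := c ⬝ᵥ (aeval A f) *ᵥ x
  map_add' f g := by simp only [map_add, add_mulVec, dotProduct_add]
  map_smul' a f := by simp only [map_smul, smul_mulVec, dotProduct_smul, RingHom.id_apply]

theorem Matrix.outputFunctional_X_pow (A : Matrix ι ι R) (c x : ι → R) (k : ℕ) :
    A.outputFunctional c x (X ^ k) = c ⬝ᵥ (A ^ k) *ᵥ x := by
  simp [outputFunctional]

theorem Matrix.outputFunctional_mul_charpoly (A : Matrix ι ι R) (c x : ι → R) (f : R[X]) :
    A.outputFunctional c x (f * A.charpoly) = 0 := by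
  simp [outputFunctional, aeval_self_charpoly]

end OutputFunctional

section FunctionalsOnPolynomials

variable {R M : Type*} [CommRing R] [AddCommGroup M] [Module R M]

theorem Polynomial.linearMap_eq_zero_of_degree_lt {L : R[X] →ₗ[R] M} {k : ℕ}
    (hL : ∀ j < k, L (X ^ j) = 0) {f : R[X]} (hf : f.degree < k) : L f = 0 := by
  classical
  have hspan : degreeLT R k ≤ LinearMap.ker L := by
    rw [degreeLT_eq_span_X_pow, Submodule.span_le]
    simpa [Set.subset_def] using hL
  exact hspan (mem_degreeLT.2 hf)

theorem Polynomial.linearMap_eq_zero_of_monic {L : R[X] →ₗ[R] M} {g : R[X]} (hg : g.Monic)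
    (hmul : ∀ f, L (g * f) = 0) (hL : ∀ j < g.natDegree, L (X ^ j) = 0) : L = 0 := by
  nontriviality R
  refine LinearMap.ext fun f => ?_
  rw [LinearMap.zero_apply, ← modByMonic_add_div f g, map_add, hmul, add_zero]
  refine linearMap_eq_zero_of_degree_lt hL ?_
  simpa only [← degree_eq_natDegree hg.ne_zero] using degree_modByMonic_lt f hg

theorem Polynomial.linearMap_eq_zero_of_isCoprime {L₁ L₂ : R[X] →ₗ[R] M} {p₁ p₂ : R[X]}
    (hp₁ : p₁.Monic) (hp₂ : p₂.Monic) (hcop : IsCoprime p₁ p₂)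
    (h₁ : ∀ f, L₁ (f * p₁) = 0) (h₂ : ∀ f, L₂ (f * p₂) = 0)
    (h : ∀ j < p₁.natDegree + p₂.natDegree, L₁ (X ^ j) = L₂ (X ^ j)) : L₁ = 0 := by
  have hdiff : L₁ - L₂ = 0 := by
    refine linearMap_eq_zero_of_monic (hp₁.mul hp₂) (fun f => ?_) fun j hj => ?_
    · rw [LinearMap.sub_apply, sub_eq_zero,
        show p₁ * p₂ * f = f * p₂ * p₁ by ring, h₁, show f * p₂ * p₁ = f * p₁ * p₂ by ring, h₂]
    · rw [LinearMap.sub_apply, sub_eq_zero]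
      exact h j (by rwa [hp₁.natDegree_mul hp₂] at hj)
  obtain ⟨u, v, huv⟩ := hcop
  refine LinearMap.ext fun f => ?_
  calc L₁ f = L₁ (f * u * p₁) + L₁ (f * v * p₂) := by
        rw [← map_add]; congr 1; linear_combination (-f) * huv
    _ = L₂ (f * v * p₂) := by
        rw [h₁, zero_add, ← sub_eq_zero, ← LinearMap.sub_apply, hdiff, LinearMap.zero_apply]
    _ = 0 := h₂ _

end FunctionalsOnPolynomials

theorem Matrix.isCoprime_charpoly_of_spectrum_disjoint {K L : Type*} [Field K] [Field L]
    [IsAlgClosed L] [Algebra K L] {m n : Type*} [Fintype m] [DecidableEq m] [Fintype n]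
    [DecidableEq n] (A : Matrix m m K) (B : Matrix n n K)
    (h : Disjoint (spectrum L (A.map (algebraMap K L))) (spectrum L (B.map (algebraMap K L)))) :
    IsCoprime A.charpoly B.charpoly := by
  rw [isCoprime_iff_aeval_ne_zero_of_isAlgClosed K L]
  intro a
  simp only [aeval_def, eval₂_eq_eval_map, ← charpoly_map, ← not_and_or]
  exact fun ⟨hA, hB⟩ => h.notMem_of_mem_left (mem_spectrum_of_isRoot_charpoly hA)
    (mem_spectrum_of_isRoot_charpoly hB)

/-- If `A 1, A 2 ∈ ℝ^{n×n}` have no common eigenvalue over `ℂ`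
and the scalar output sequences `c₁ A(1)^k x₁` and `c₂ A(2)^k x₂` agree for
`k = 0, …, 2n−1`, then both are zero on that range. -/
theorem stmt_6 (n : ℕ) (A₁ A₂ : Matrix (Fin n) (Fin n) ℝ)
    (hspec : spectrum ℂ (A₁.map (algebraMap ℝ ℂ)) ∩
              spectrum ℂ (A₂.map (algebraMap ℝ ℂ)) = ∅)
    (c₁ c₂ : Fin n → ℝ) (x₁ x₂ : Fin n → ℝ)
    (h : ∀ k < 2 * n, c₁ ⬝ᵥ (A₁ ^ k).mulVec x₁ = c₂ ⬝ᵥ (A₂ ^ k).mulVec x₂) :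
    ∀ k < 2 * n, c₁ ⬝ᵥ (A₁ ^ k).mulVec x₁ = 0 := by
  have hcop := A₁.isCoprime_charpoly_of_spectrum_disjoint A₂
    (Set.disjoint_iff_inter_eq_empty.2 hspec)
  have hdeg (A : Matrix (Fin n) (Fin n) ℝ) : A.charpoly.natDegree = n := by
    rw [charpoly_natDegree_eq_dim, Fintype.card_fin]
  have hL₁ : A₁.outputFunctional c₁ x₁ = 0 := by
    refine linearMap_eq_zero_of_isCoprime A₁.charpoly_monic A₂.charpoly_monic hcop
      (A₁.outputFunctional_mul_charpoly c₁ x₁) (A₂.outputFunctional_mul_charpoly c₂ x₂)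
      fun j hj => ?_
    rw [outputFunctional_X_pow, outputFunctional_X_pow]
    exact h j (by rw [hdeg, hdeg] at hj; omega)
  intro k _
  rw [← outputFunctional_X_pow, hL₁, LinearMap.zero_apply]
end

section
/- Let A ∈ ℝ^{n×n}, C ∈ ℝ^{m×n}, and q ≥ 0. The following are equivalent: (i) for every pair of disjoint sensor sets K_1, K_2 ⊆ {1,…,m} with |K_1| ≤ q and |K_2| ≤ q, and every λ ∈ ℂ, x ∈ ℂ^n nonzero, d_1, d_2, one cannot have A x = λ x and C x + D(K_1)d_1 + D(K_2)d_2 = 0; (ii) for every set S ⊆ {1,…,m} with |S| ≤ 2q, the pair (A, C^{S^c}) is observable, where C^{S^c} is C with the rows in S removed. -/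
/-!
By the Hautus (PBH) test, a real pair `(A, C')` is observable iff no complex eigenvector of `A`
lies in the kernel of `C'`: the complexified unobservable subspace is `A`-invariant, so if it is
nonzero it contains an eigenvector, and conversely the real and imaginary parts of such an
eigenvector are unobservable. Applied to `C' = C^{Sᶜ}`, the eigenvector condition says that
`C x` is supported on `S`; splitting a set of at most `2q` sensors into two disjoint sets of at
most `q` sensors, this is exactly an attack `d₁ + d₂ = -C x` of the form in (i).
-/

open Matrix

namespace Finset

theorem exists_disjoint_union_eq_of_card_le_two_mul {α : Type*} [DecidableEq α] {S : Finset α}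
    {q : ℕ} (hS : S.card ≤ 2 * q) :
    ∃ K₁ K₂ : Finset α, Disjoint K₁ K₂ ∧ K₁.card ≤ q ∧ K₂.card ≤ q ∧ K₁ ∪ K₂ = S := by
  obtain ⟨K₁, hK₁S, hK₁⟩ := S.exists_subset_card_eq (min_le_right q S.card)
  refine ⟨K₁, S \ K₁, disjoint_sdiff, by omega, ?_, union_sdiff_of_subset hK₁S⟩
  rw [card_sdiff_of_subset hK₁S]
  omega

end Finset

theorem exists_add_add_eq_zero_iff {ι G : Type*} [DecidableEq ι] [AddCommGroup G]
    (K₁ K₂ : Finset ι) (y : ι → G) :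
    (∃ d₁ d₂ : ι → G, (∀ i ∉ K₁, d₁ i = 0) ∧ (∀ i ∉ K₂, d₂ i = 0) ∧ y + d₁ + d₂ = 0) ↔
      ∀ i ∉ K₁ ∪ K₂, y i = 0 := by
  constructor
  · rintro ⟨d₁, d₂, hd₁, hd₂, hsum⟩ i hi
    rw [Finset.mem_union, not_or] at hi
    simpa [hd₁ i hi.1, hd₂ i hi.2] using congrFun hsum i
  · intro hy
    refine ⟨fun i => if i ∈ K₁ then -y i else 0, fun i => if i ∈ K₂ \ K₁ then -y i else 0,
      fun i hi => if_neg hi, fun i hi => if_neg fun h => hi (Finset.mem_sdiff.1 h).1,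
      funext fun i => ?_⟩
    by_cases h₁ : i ∈ K₁ <;> by_cases h₂ : i ∈ K₂ <;> simp [h₁, h₂, hy i]

namespace Module.End

theorem exists_hasEigenvector_mem_of_mapsTo {K V : Type*} [Field K] [IsAlgClosed K]
    [AddCommGroup V] [Module K V] [FiniteDimensional K V] (f : End K V) {W : Submodule K V}
    (hW : ∀ v ∈ W, f v ∈ W) (hW₀ : W ≠ ⊥) : ∃ μ v, v ∈ W ∧ f.HasEigenvector μ v := by
  have : Nontrivial W := Submodule.nontrivial_iff_ne_bot.mpr hW₀
  obtain ⟨μ, hμ⟩ := exists_eigenvalue (f.restrict hW)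
  obtain ⟨v, hv⟩ := hμ.exists_hasEigenvector
  refine ⟨μ, v, v.2, ?_, by simpa using hv.2⟩
  simpa using congrArg Subtype.val hv.apply_eq_smul

end Module.End

namespace Matrix

variable {m n : Type*} [Fintype n]

theorem mulVec_re (M : Matrix m n ℝ) (x : n → ℂ) :
    M *ᵥ (fun j => (x j).re) = fun i => ((M.map (algebraMap ℝ ℂ) *ᵥ x) i).re := by
  ext i
  simp [mulVec, dotProduct, Complex.re_sum]

theorem mulVec_im (M : Matrix m n ℝ) (x : n → ℂ) :
    M *ᵥ (fun j => (x j).im) = fun i => ((M.map (algebraMap ℝ ℂ) *ᵥ x) i).im := by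
  ext i
  simp [mulVec, dotProduct, Complex.im_sum]

theorem submatrix_mulVec_eq_zero_iff {R : Type*} [NonUnitalNonAssocSemiring R]
    (M : Matrix m n R) (S : Finset m) (x : n → R) :
    M.submatrix (Subtype.val : {i // i ∉ S} → m) id *ᵥ x = 0 ↔ ∀ i ∉ S, (M *ᵥ x) i = 0 := by
  simp only [funext_iff, Pi.zero_apply, Subtype.forall]
  rfl

variable [DecidableEq n]

/-- All powers of `A` are used rather than the first `n`; by Cayley–Hamilton this is the usual
rank condition on the observability matrix. -/
def IsObservable {R : Type*} [Semiring R] (A : Matrix n n R) (C : Matrix m n R) : Prop :=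
  ∀ x : n → R, (∀ k : ℕ, (C * A ^ k) *ᵥ x = 0) → x = 0

theorem pow_mulVec_of_mulVec_eq_smul {R : Type*} [CommSemiring R]
    {A : Matrix n n R} {μ : R} {x : n → R} (hx : A *ᵥ x = μ • x) (k : ℕ) :
    (A ^ k) *ᵥ x = μ ^ k • x := by
  induction k with
  | zero => simp
  | succ k ih => rw [pow_succ, ← mulVec_mulVec, hx, mulVec_smul, ih, smul_smul, ← pow_succ']

theorem isObservable_iff_forall_eigenvector (A : Matrix n n ℝ) (C : Matrix m n ℝ) :
    IsObservable A C ↔ ∀ (μ : ℂ) (x : n → ℂ), x ≠ 0 →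
      A.map (algebraMap ℝ ℂ) *ᵥ x = μ • x → C.map (algebraMap ℝ ℂ) *ᵥ x ≠ 0 := by
  have hmap (k : ℕ) :
      (C * A ^ k).map (algebraMap ℝ ℂ) = C.map (algebraMap ℝ ℂ) * A.map (algebraMap ℝ ℂ) ^ k := by
    rw [Matrix.map_mul, ← RingHom.mapMatrix_apply, map_pow, RingHom.mapMatrix_apply]
  unfold IsObservable
  constructor
  · intro hobs μ x hx heig hCx
    have hunobs (k : ℕ) : (C.map (algebraMap ℝ ℂ) * A.map (algebraMap ℝ ℂ) ^ k) *ᵥ x = 0 := by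
      rw [← mulVec_mulVec, pow_mulVec_of_mulVec_eq_smul heig, mulVec_smul, hCx, smul_zero]
    have hre := hobs _ fun k => by rw [mulVec_re, hmap, hunobs]; rfl
    have him := hobs _ fun k => by rw [mulVec_im, hmap, hunobs]; rfl
    exact hx (funext fun j => Complex.ext (congrFun hre j) (congrFun him j))
  · intro hPBH x hunobs
    by_contra hx
    let W : Submodule ℂ (n → ℂ) :=
      ⨅ k : ℕ, LinearMap.ker (C.map (algebraMap ℝ ℂ) * A.map (algebraMap ℝ ℂ) ^ k).mulVecLin
    have hW : ∀ v ∈ W, (A.map (algebraMap ℝ ℂ)).mulVecLin v ∈ W := by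
      simp only [W, Submodule.mem_iInf, LinearMap.mem_ker, mulVecLin_apply, mulVec_mulVec]
      intro v hv k
      rw [Matrix.mul_assoc, ← pow_succ]
      exact hv (k + 1)
    have hxW : (fun j => (x j : ℂ)) ∈ W := by
      simp only [W, Submodule.mem_iInf, LinearMap.mem_ker, mulVecLin_apply]
      intro k
      ext i
      have := RingHom.map_mulVec (algebraMap ℝ ℂ) (C * A ^ k) x i
      rw [hunobs k, hmap] at this
      simpa [Function.comp_def] using this.symm
    have hW₀ : W ≠ ⊥ := by
      intro hbot
      have hx₀ : (fun j => (x j : ℂ)) = 0 := by rw [← Submodule.mem_bot ℂ, ← hbot]; exact hxW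
      exact hx (funext fun j => by simpa using congrFun hx₀ j)
    obtain ⟨μ, v, hvW, hv⟩ := Module.End.exists_hasEigenvector_mem_of_mapsTo _ hW hW₀
    refine hPBH μ v hv.2 hv.apply_eq_smul ?_
    simpa using (Submodule.mem_iInf _).1 hvW 0

theorem isObservable_submatrix_iff {R : Type*} [Semiring R] (A : Matrix n n R)
    (C : Matrix m n R) (S : Finset m) :
    IsObservable A (C.submatrix (Subtype.val : {i // i ∉ S} → m) id) ↔
      ∀ x : n → R, (∀ k : ℕ, ∀ i ∉ S, ((C * A ^ k) *ᵥ x) i = 0) → x = 0 := by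
  have hmul (k : ℕ) : (C * A ^ k).submatrix (Subtype.val : {i // i ∉ S} → m) id =
      C.submatrix Subtype.val id * A ^ k := by
    rw [submatrix_mul _ _ _ id _ Function.bijective_id, submatrix_id_id]
  simp only [IsObservable, ← submatrix_mulVec_eq_zero_iff, hmul]

end Matrix

/-- PBH-style characterization of `2q`-sparse observability:
no eigenvector of `A` can be masked by attacks supported on two disjoint sets
of at most `q` sensors each, iff `(A, C)` remains observable after removing
any set of at most `2q` rows of `C`. -/
theorem stmt_15 (n m q : ℕ) (A : Matrix (Fin n) (Fin n) ℝ)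
    (C : Matrix (Fin m) (Fin n) ℝ) :
    (∀ (K₁ K₂ : Finset (Fin m)), Disjoint K₁ K₂ → K₁.card ≤ q → K₂.card ≤ q →
      ∀ (lam : ℂ) (x : Fin n → ℂ) (d₁ d₂ : Fin m → ℂ),
        x ≠ 0 → (∀ i ∉ K₁, d₁ i = 0) → (∀ i ∉ K₂, d₂ i = 0) →
        ¬((A.map (algebraMap ℝ ℂ)).mulVec x = lam • x ∧
          (C.map (algebraMap ℝ ℂ)).mulVec x + d₁ + d₂ = 0)) ↔
    (∀ S : Finset (Fin m), S.card ≤ 2 * q →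
      ∀ x : Fin n → ℝ, (∀ (k : ℕ), ∀ i ∉ S, (C * A ^ k).mulVec x i = 0) →
        x = 0) := by
  constructor
  · intro h S hS
    rw [← isObservable_submatrix_iff, isObservable_iff_forall_eigenvector]
    intro μ x hx heig hCx
    obtain ⟨K₁, K₂, hdisj, h₁, h₂, rfl⟩ := Finset.exists_disjoint_union_eq_of_card_le_two_mul hS
    obtain ⟨d₁, d₂, hd₁, hd₂, hsum⟩ := (exists_add_add_eq_zero_iff K₁ K₂ _).2
      ((submatrix_mulVec_eq_zero_iff (C.map (algebraMap ℝ ℂ)) _ _).1 hCx)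
    exact h K₁ K₂ hdisj h₁ h₂ μ x d₁ d₂ hx hd₁ hd₂ ⟨heig, hsum⟩
  · rintro h K₁ K₂ - h₁ h₂ μ x d₁ d₂ hx hd₁ hd₂ ⟨heig, hsum⟩
    have hobs := (isObservable_submatrix_iff A C (K₁ ∪ K₂)).2
      (h _ ((Finset.card_union_le K₁ K₂).trans (by omega)))
    refine (isObservable_iff_forall_eigenvector _ _).1 hobs μ x hx heig ?_
    exact (submatrix_mulVec_eq_zero_iff (C.map (algebraMap ℝ ℂ)) _ _).2
      ((exists_add_add_eq_zero_iff K₁ K₂ _).1 ⟨d₁, d₂, hd₁, hd₂, hsum⟩)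
end

section
/- Let A(1), A(2) ∈ ℂ^{n×n} have no common eigenvalue, and let c_1, c_2 ∈ ℂ^{1×n}, with both pairs (A(1), c_1) and (A(2), c_2) observable. Define 𝒪_j ∈ ℂ^{N×n} as the stacked observability matrix with rows c_j A(j)^k, k = 0, …, N−1, for N ≥ 2n. Then there is no nonzero vector v with 𝒪_1 v_1 = 𝒪_2 v_2 ≠ 0 for any v_1, v_2; i.e., Im(𝒪_1) ∩ Im(𝒪_2) = {0}. -/
/-!
Both `k ↦ c₁ A₁ᵏ v₁` and `k ↦ c₂ A₂ᵏ v₂` are linear recurrence sequences, annihilated (as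
polynomials in the shift operator) by `χ_{A₁}` and `χ_{A₂}` respectively, by Cayley–Hamilton.
If they agree on `2n` terms, their difference is annihilated by the monic degree-`2n`
polynomial `χ_{A₁} χ_{A₂}` and has `2n` vanishing initial terms, so it vanishes: the two
sequences coincide. The common sequence is then annihilated by the coprime polynomials
`χ_{A₁}` and `χ_{A₂}`, hence is zero.
-/

open Matrix Polynomial

namespace Sequence

section
variable {R : Type*} [CommSemiring R]

def shift : (ℕ → R) →ₗ[R] (ℕ → R) := LinearMap.funLeft R R (· + 1)

theorem shift_pow_apply (i : ℕ) (s : ℕ → R) (k : ℕ) : (shift ^ i) s k = s (k + i) := by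
  induction i generalizing s with
  | zero => rfl
  | succ i ih => rw [pow_succ, Module.End.mul_apply, ih]; rfl

theorem aeval_shift_apply (p : R[X]) (s : ℕ → R) (k : ℕ) :
    aeval shift p s k = ∑ i ∈ Finset.range (p.natDegree + 1), p.coeff i * s (k + i) := by
  simp [aeval_eq_sum_range, shift_pow_apply]

theorem eq_zero_of_aeval_shift_eq_zero {p : R[X]} (hp : p.Monic) {s : ℕ → R}
    (hs : aeval shift p s = 0) (hinit : ∀ k < p.natDegree, s k = 0) : s = 0 := by
  funext m
  induction m using Nat.strong_induction_on with
  | _ m ih =>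
  obtain hm | hm := lt_or_ge m p.natDegree
  · exact hinit m hm
  have hrec := congrFun hs (m - p.natDegree)
  rw [aeval_shift_apply, Finset.sum_range_succ, Nat.sub_add_cancel hm, hp.coeff_natDegree,
    one_mul, Finset.sum_eq_zero fun i hi => ?_, zero_add] at hrec
  · exact hrec
  · rw [ih _ (by simp at hi; omega), Pi.zero_apply, mul_zero]

end

section
variable {R : Type*} [CommRing R]

theorem eq_of_aeval_shift_eq_zero {p : R[X]} (hp : p.Monic) {s t : ℕ → R}
    (hs : aeval shift p s = 0) (ht : aeval shift p t = 0)
    (hinit : ∀ k < p.natDegree, s k = t k) : s = t :=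
  sub_eq_zero.mp <| eq_zero_of_aeval_shift_eq_zero hp (by rw [map_sub, hs, ht, sub_zero])
    fun k hk => sub_eq_zero.mpr (hinit k hk)

theorem eq_zero_of_aeval_shift_of_isCoprime {p q : R[X]} (hp : p.Monic) (hq : q.Monic)
    (hpq : IsCoprime p q) {s t : ℕ → R} (hs : aeval shift p s = 0) (ht : aeval shift q t = 0)
    (hinit : ∀ k < p.natDegree + q.natDegree, s k = t k) : s = 0 := by
  have hst : s = t := by
    refine eq_of_aeval_shift_eq_zero (hp.mul hq) ?_ ?_ (by rwa [hp.natDegree_mul hq])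
    · rw [mul_comm, map_mul, Module.End.mul_apply, hs, map_zero]
    · rw [map_mul, Module.End.mul_apply, ht, map_zero]
  subst hst
  exact Submodule.disjoint_def.mp (disjoint_ker_aeval_of_isCoprime shift hpq) s
    (LinearMap.mem_ker.mpr hs) (LinearMap.mem_ker.mpr ht)

end

end Sequence

namespace Matrix

open Sequence

section
variable {R : Type*} [CommRing R] {n : Type*} [Fintype n] [DecidableEq n]

theorem aeval_shift_dotProduct_pow_mulVec (A : Matrix n n R) (c v : n → R) (p : R[X]) :
    aeval shift p (fun k => c ⬝ᵥ (A ^ k) *ᵥ v) = fun k => c ⬝ᵥ (A ^ k) *ᵥ (aeval A p *ᵥ v) := by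
  funext k
  rw [aeval_shift_apply, aeval_eq_sum_range]
  simp only [sum_mulVec, mulVec_sum, dotProduct_sum, smul_mulVec, mulVec_smul, dotProduct_smul,
    smul_eq_mul, pow_add, mulVec_mulVec]

theorem aeval_shift_charpoly_dotProduct_pow_mulVec (A : Matrix n n R) (c v : n → R) :
    aeval shift A.charpoly (fun k => c ⬝ᵥ (A ^ k) *ᵥ v) = 0 := by
  rw [aeval_shift_dotProduct_pow_mulVec, aeval_self_charpoly, zero_mulVec]
  funext k; simp

end

theorem isCoprime_charpoly_of_disjoint_spectrum {K : Type*} [Field K] [IsAlgClosed K]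
    {m n : Type*} [Fintype m] [DecidableEq m] [Fintype n] [DecidableEq n]
    {A : Matrix m m K} {B : Matrix n n K} (h : Disjoint (spectrum K A) (spectrum K B)) :
    IsCoprime A.charpoly B.charpoly := by
  rw [isCoprime_iff_aeval_ne_zero_of_isAlgClosed (k := K) K]
  intro a
  by_contra! hab
  exact h.ne_of_mem (mem_spectrum_iff_isRoot_charpoly.mpr (by simpa using hab.1))
    (mem_spectrum_iff_isRoot_charpoly.mpr (by simpa using hab.2)) rfl

theorem dotProduct_pow_mulVec_eq_zero_of_eqOn {K : Type*} [Field K] [IsAlgClosed K]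
    {m n : Type*} [Fintype m] [DecidableEq m] [Fintype n] [DecidableEq n]
    {A : Matrix m m K} {B : Matrix n n K} (h : Disjoint (spectrum K A) (spectrum K B))
    {a v : m → K} {b w : n → K}
    (hinit : ∀ k < Fintype.card m + Fintype.card n, a ⬝ᵥ (A ^ k) *ᵥ v = b ⬝ᵥ (B ^ k) *ᵥ w)
    (k : ℕ) : a ⬝ᵥ (A ^ k) *ᵥ v = 0 :=
  congrFun (eq_zero_of_aeval_shift_of_isCoprime A.charpoly_monic B.charpoly_monic
    (isCoprime_charpoly_of_disjoint_spectrum h)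
    (aeval_shift_charpoly_dotProduct_pow_mulVec A a v)
    (aeval_shift_charpoly_dotProduct_pow_mulVec B b w)
    (by simpa only [charpoly_natDegree_eq_dim] using hinit)) k

theorem mulVec_apply_eq_dotProduct_pow_mulVec {R : Type*} [CommSemiring R]
    {m n : Type*} [Fintype n] [DecidableEq n] {O : Matrix m n R} {A : Matrix n n R} {c : n → R}
    {e : m → ℕ} (hO : ∀ k i, O k i = vecMul c (A ^ e k) i) (v : n → R) (k : m) :
    (O *ᵥ v) k = c ⬝ᵥ (A ^ e k) *ᵥ v := by
  rw [dotProduct_mulVec, ← funext (hO k)]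
  rfl

end Matrix

theorem stmt_19_general (n N : ℕ) (hN : 2 * n ≤ N)
    (A₁ A₂ : Matrix (Fin n) (Fin n) ℂ) (c₁ c₂ : Fin n → ℂ)
    (hspec : spectrum ℂ A₁ ∩ spectrum ℂ A₂ = ∅)
    (O₁ O₂ : Matrix (Fin N) (Fin n) ℂ)
    (hO₁ : ∀ (k : Fin N) (i : Fin n), O₁ k i = Matrix.vecMul c₁ (A₁ ^ (k : ℕ)) i)
    (hO₂ : ∀ (k : Fin N) (i : Fin n), O₂ k i = Matrix.vecMul c₂ (A₂ ^ (k : ℕ)) i) :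
    LinearMap.range O₁.mulVecLin ⊓ LinearMap.range O₂.mulVecLin = ⊥ := by
  rw [Submodule.eq_bot_iff]
  rintro _ ⟨⟨v₁, rfl⟩, v₂, h⟩
  simp only [mulVecLin_apply] at h ⊢
  have hinit : ∀ k < Fintype.card (Fin n) + Fintype.card (Fin n),
      c₁ ⬝ᵥ (A₁ ^ k) *ᵥ v₁ = c₂ ⬝ᵥ (A₂ ^ k) *ᵥ v₂ := by
    intro k hk
    have hkN : k < N := by simp only [Fintype.card_fin] at hk; omega
    rw [← mulVec_apply_eq_dotProduct_pow_mulVec hO₁ v₁ ⟨k, hkN⟩,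
      ← mulVec_apply_eq_dotProduct_pow_mulVec hO₂ v₂ ⟨k, hkN⟩, h]
  funext k
  rw [mulVec_apply_eq_dotProduct_pow_mulVec hO₁]
  exact dotProduct_pow_mulVec_eq_zero_of_eqOn (Set.disjoint_iff_inter_eq_empty.mpr hspec) hinit k

/-- If `(A₁,c₁)` and `(A₂,c₂)` are observable with disjoint
spectra, the images of the stacked observability matrices of depth `N ≥ 2n`
intersect trivially. -/
theorem stmt_19 (n N : ℕ) (hN : 2 * n ≤ N)
    (A₁ A₂ : Matrix (Fin n) (Fin n) ℂ) (c₁ c₂ : Fin n → ℂ)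
    (hspec : spectrum ℂ A₁ ∩ spectrum ℂ A₂ = ∅)
    (hobs₁ : ∀ x : Fin n → ℂ, (∀ k < n, c₁ ⬝ᵥ (A₁ ^ k).mulVec x = 0) → x = 0)
    (hobs₂ : ∀ x : Fin n → ℂ, (∀ k < n, c₂ ⬝ᵥ (A₂ ^ k).mulVec x = 0) → x = 0)
    (O₁ O₂ : Matrix (Fin N) (Fin n) ℂ)
    (hO₁ : ∀ (k : Fin N) (i : Fin n), O₁ k i = Matrix.vecMul c₁ (A₁ ^ (k : ℕ)) i)
    (hO₂ : ∀ (k : Fin N) (i : Fin n), O₂ k i = Matrix.vecMul c₂ (A₂ ^ (k : ℕ)) i) :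
    LinearMap.range O₁.mulVecLin ⊓ LinearMap.range O₂.mulVecLin = ⊥ :=
  stmt_19_general n N hN A₁ A₂ c₁ c₂ hspec O₁ O₂ hO₁ hO₂
end
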